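/- Under hyper-generalized recurrence with recurrence 1-forms A and B, if r = 0, then the conharmonic curvature tensor satisfies ∇_U ℂ = A(U)·ℂ for all U ∈ V, i.e. the space is conharmonically recurrent with recurrence form A. (Theorem 3.2(b).) -/

import Mathlib

open scoped BigOperators

/-- Kulkarni–Nomizu product of two bilinear forms (as real-valued functions). -/
def KN {V : Type*} (h k : V → V → ℝ) (X Y Z W : V) : ℝ :=
  h X Z * k Y W + h Y W * k X Z - h X W * k Y Z - h Y Z * k X W

/-- The tensor `G(X,Y,Z,W) = g(X,Z)g(Y,W) - g(Y,Z)g(X,W)`. -/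
def Gten {V : Type*} (g : V → V → ℝ) (X Y Z W : V) : ℝ :=
  g X Z * g Y W - g Y Z * g X W

/-- Derivation action of the curvature endomorphism `Rend U V` on a quadrilinear form `T`. -/
def derAct {V : Type*} (Rend : V → V → V → V) (T : V → V → V → V → ℝ)
    (U V' X Y Z W : V) : ℝ :=
  - T (Rend U V' X) Y Z W - T X (Rend U V' Y) Z W
    - T X Y (Rend U V' Z) W - T X Y Z (Rend U V' W)

/-!
Contracting the Kulkarni–Nomizu product `g ∧ Ric` over a `g`-dual pair of bases gives
`r • g + (n - 2) • Ric`. When `r = 0`, contracting the recurrence relation therefore yields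
`∇_U Ric = (A(U) + (n - 2) B(U)) • Ric`; substituted into `∇_U ℂ`, the `B`-terms cancel and
only `A(U) • ℂ` is left.
-/

open Finset

section DualPairing

variable {K V ι : Type*} [Field K] [AddCommGroup V] [Module K V] [Fintype ι] [DecidableEq ι]

abbrev IsDualFamily (g : V →ₗ[K] V →ₗ[K] K) (b : ι → V) (e' : ι → V) : Prop :=
  ∀ i j, g (b i) (e' j) = if i = j then 1 else 0

namespace IsDualFamily

variable {g : V →ₗ[K] V →ₗ[K] K} {b : Module.Basis ι K V} {e' : ι → V}

theorem apply_dual_eq_repr (hdual : IsDualFamily g b e')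
    (X : V) (j : ι) : g X (e' j) = b.repr X j := by
  conv_lhs => rw [← b.sum_repr X]
  simp [hdual, -Module.Basis.sum_repr]

theorem apply_sum_smul_dual (hdual : IsDualFamily g b e')
    (c : ι → K) (i : ι) : g (b i) (∑ j, c j • e' j) = c i := by
  simp [hdual]

theorem linearIndependent (hdual : IsDualFamily g b e') :
    LinearIndependent K e' :=
  Fintype.linearIndependent_iff.mpr fun c hc i => by
    simpa [hc] using (hdual.apply_sum_smul_dual c i).symm

theorem sum_smul_basis (hdual : IsDualFamily g b e')
    (X : V) : ∑ i, g X (e' i) • b i = X := by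
  simp only [hdual.apply_dual_eq_repr, b.sum_repr]

theorem sum_smul_dual (hdual : IsDualFamily g b e')
    (Z : V) : ∑ i, g (b i) Z • e' i = Z := by
  have : Module.Finite K V := .of_basis b
  have hspan := hdual.linearIndependent.span_eq_top_of_card_eq_finrank'
    (Module.finrank_eq_card_basis b).symm
  obtain ⟨c, rfl⟩ :=
    (Submodule.mem_span_range_iff_exists_fun K).mp (hspan ▸ Submodule.mem_top (x := Z))
  simp only [hdual.apply_sum_smul_dual]

theorem sum_mul_apply_basis (hdual : IsDualFamily g b e')
    (f : V →ₗ[K] K) (X : V) : ∑ i, g X (e' i) * f (b i) = f X := by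
  conv_rhs => rw [← hdual.sum_smul_basis X]
  simp

theorem sum_mul_apply_dual (hdual : IsDualFamily g b e')
    (f : V →ₗ[K] K) (Z : V) : ∑ i, g (b i) Z * f (e' i) = f Z := by
  conv_rhs => rw [← hdual.sum_smul_dual Z]
  simp

end IsDualFamily

end DualPairing

section Contraction

variable {K V ι : Type*} [Field K] [AddCommGroup V] [Module K V] [Fintype ι]

def ricciContraction (b e' : ι → V) (R : V →ₗ[K] V →ₗ[K] V →ₗ[K] V →ₗ[K] K) :
    V →ₗ[K] V →ₗ[K] K :=
  ∑ i, (R.flip (b i)).compr₂ (LinearMap.applyₗ (e' i))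

@[simp]
theorem ricciContraction_apply (b e' : ι → V) (R : V →ₗ[K] V →ₗ[K] V →ₗ[K] V →ₗ[K] K)
    (X Z : V) : ricciContraction b e' R X Z = ∑ i, R X (b i) Z (e' i) := by
  simp [ricciContraction]

end Contraction

theorem KN_smul_right {V : Type*} (h k : V → V → ℝ) (c : ℝ) (X Y Z W : V) :
    KN h (fun a d => c * k a d) X Y Z W = c * KN h k X Y Z W := by
  unfold KN
  ring

theorem IsDualFamily.sum_KN {V ι : Type*} [AddCommGroup V] [Module ℝ V] [Fintype ι]
    [DecidableEq ι] {g : V →ₗ[ℝ] V →ₗ[ℝ] ℝ} {b : Module.Basis ι ℝ V} {e' : ι → V}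
    (hdual : IsDualFamily g b e') (k : V →ₗ[ℝ] V →ₗ[ℝ] ℝ) (X Z : V) :
    ∑ i, KN (fun a c => g a c) (fun a c => k a c) X (b i) Z (e' i)
      = g X Z * ∑ i, k (b i) (e' i) + (Fintype.card ι - 2) * k X Z := by
  have hX : ∑ i, g X (e' i) * k (b i) Z = k X Z := hdual.sum_mul_apply_basis (k.flip Z) X
  have hZ : ∑ i, g (b i) Z * k X (e' i) = k X Z := hdual.sum_mul_apply_dual (k X) Z
  have htrace : ∑ i, g (b i) (e' i) = Fintype.card ι := by simp [hdual]
  simp only [KN, sum_sub_distrib, sum_add_distrib, ← mul_sum, ← sum_mul, hX, hZ, htrace]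
  ring

theorem hgr_conharmonically_recurrent_of_zero_scalar_general {V : Type*} [AddCommGroup V] [Module ℝ V]
    (n : ℕ) (hn : 3 ≤ n)
    (b : Module.Basis (Fin n) ℝ V) (e' : Fin n → V)
    (g : V →ₗ[ℝ] V →ₗ[ℝ] ℝ)
    (hdual : ∀ i j, g (b i) (e' j) = if i = j then (1 : ℝ) else 0)
    (R : V →ₗ[ℝ] V →ₗ[ℝ] V →ₗ[ℝ] V →ₗ[ℝ] ℝ)
    (Ric : V → V → ℝ)
    (hRic : ∀ X Z, Ric X Z = ∑ i, R X (b i) Z (e' i))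
    (r : ℝ) (hr : r = ∑ i, Ric (b i) (e' i))
    (D : V →ₗ[ℝ] V →ₗ[ℝ] V →ₗ[ℝ] V →ₗ[ℝ] V →ₗ[ℝ] ℝ)
    (A B : V →ₗ[ℝ] ℝ)
    (hHGR : ∀ U X Y Z W,
      D U X Y Z W = A U * R X Y Z W + B U * KN (fun a c => g a c) Ric X Y Z W)
    (DRic : V → V → V → ℝ)
    (hDRicDef : ∀ U X Z, DRic U X Z = ∑ i, D U X (b i) Z (e' i))
    (Cc : V → V → V → V → ℝ)
    (hCc : ∀ X Y Z W, Cc X Y Z W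
      = R X Y Z W - (1 / ((n : ℝ) - 2)) * KN (fun a c => g a c) Ric X Y Z W)
    (DC : V → V → V → V → V → ℝ)
    (hDC : ∀ U X Y Z W, DC U X Y Z W
      = D U X Y Z W - (1 / ((n : ℝ) - 2)) * KN (fun a c => g a c) (DRic U) X Y Z W)
    (hr0 : r = 0)
    :
    ∀ U X Y Z W, DC U X Y Z W = A U * Cc X Y Z W := by
  have hn2 : (n : ℝ) - 2 ≠ 0 := by
    have : (3 : ℝ) ≤ n := by exact_mod_cast hn
    linarith
  obtain rfl : Ric = fun X Z => ricciContraction b e' R X Z := by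
    funext X Z
    simp [hRic]
  have hKN (X Z : V) : ∑ i, KN (fun a c => g a c) (fun a c => ricciContraction b e' R a c)
      X (b i) Z (e' i) = (n - 2) * ricciContraction b e' R X Z := by
    rw [IsDualFamily.sum_KN hdual, ← hr, hr0, Fintype.card_fin]
    ring
  have hDRic (U : V) :
      DRic U = fun X Z => (A U + (n - 2) * B U) * ricciContraction b e' R X Z := by
    funext X Z
    simp only [hDRicDef, hHGR, sum_add_distrib, ← mul_sum, hKN]
    rw [ricciContraction_apply]
    ring
  intro U X Y Z W
  rw [hDC, hHGR, hCc, hDRic, KN_smul_right]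
  field_simp
  ring

theorem hgr_conharmonically_recurrent_of_zero_scalar {V : Type*} [AddCommGroup V] [Module ℝ V]
    (n : ℕ) (hn : 3 ≤ n)
    (b : Module.Basis (Fin n) ℝ V) (e' : Fin n → V)
    (g : V →ₗ[ℝ] V →ₗ[ℝ] ℝ)
    (hg_symm : ∀ X Y, g X Y = g Y X)
    (hg_nd : ∀ X, (∀ Y, g X Y = 0) → X = 0)
    (hdual : ∀ i j, g (b i) (e' j) = if i = j then (1 : ℝ) else 0)
    (R : V →ₗ[ℝ] V →ₗ[ℝ] V →ₗ[ℝ] V →ₗ[ℝ] ℝ)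
    (hR_ne : R ≠ 0)
    (hR_anti : ∀ X Y Z W, R X Y Z W = - R Y X Z W)
    (hR_pair : ∀ X Y Z W, R X Y Z W = R Z W X Y)
    (Ric : V → V → ℝ)
    (hRic : ∀ X Z, Ric X Z = ∑ i, R X (b i) Z (e' i))
    (r : ℝ) (hr : r = ∑ i, Ric (b i) (e' i))
    (D : V →ₗ[ℝ] V →ₗ[ℝ] V →ₗ[ℝ] V →ₗ[ℝ] V →ₗ[ℝ] ℝ)
    (hBianchi : ∀ X Y Z W U, D X Y Z W U + D Y Z X W U + D Z X Y W U = 0)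
    (A B : V →ₗ[ℝ] ℝ) (hA : A ≠ 0) (hB : B ≠ 0)
    (hHGR : ∀ U X Y Z W,
      D U X Y Z W = A U * R X Y Z W + B U * KN (fun a c => g a c) Ric X Y Z W)
    (DRic : V → V → V → ℝ)
    (hDRicDef : ∀ U X Z, DRic U X Z = ∑ i, D U X (b i) Z (e' i))
    (Cc : V → V → V → V → ℝ)
    (hCc : ∀ X Y Z W, Cc X Y Z W
      = R X Y Z W - (1 / ((n : ℝ) - 2)) * KN (fun a c => g a c) Ric X Y Z W)
    (DC : V → V → V → V → V → ℝ)
    (hDC : ∀ U X Y Z W, DC U X Y Z W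
      = D U X Y Z W - (1 / ((n : ℝ) - 2)) * KN (fun a c => g a c) (DRic U) X Y Z W)
    (hr0 : r = 0)
    :
    ∀ U X Y Z W, DC U X Y Z W = A U * Cc X Y Z W :=
  hgr_conharmonically_recurrent_of_zero_scalar_general n hn b e' g hdual R Ric hRic r hr D A B hHGR
    DRic hDRicDef Cc hCc DC hDC hr0
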